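/- Let H be a group and P = ⟨x, H; R⟩ a relative one-relator presentation whose x-skeleton W has the unique min property with respect to an admissible strict weight function. Then the natural homomorphism ν : H → G(P) is injective. -/

import Mathlib

open Monoid

section Defs
variable {X Y H : Type*}

/-- `φ_W^θ(j)`: the sum `Σ_{i=1}^{j} ε_i θ(x_i)` of the weights of the first `j`
letters of the word `W` (a word is a nonempty list of pairs (letter, exponent sign)). -/
def phiW (θ : X → ℤ) (W : List (X × Bool)) (j : ℕ) : ℤ :=
  ((W.take j).map fun p => if p.2 then θ p.1 else -θ p.1).sum

/-- A weight function: a map `θ : X → ℤ` whose image generates the additive group `ℤ`. -/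
def IsWeightFun (θ : X → ℤ) : Prop :=
  AddSubgroup.closure (Set.range θ) = ⊤

/-- A strict weight function: `θ x ≠ 0` for all `x`. -/
def IsStrictWeight (θ : X → ℤ) : Prop := ∀ x, θ x ≠ 0

/-- `θ` is admissible for `W` if `φ(r) = 0` where `r` is the length of `W`. -/
def IsAdmissible (θ : X → ℤ) (W : List (X × Bool)) : Prop :=
  phiW θ W W.length = 0

/-- The successor of an index, cyclically (subscripts mod `r`). -/
def succIdx (W : List (X × Bool)) (k : Fin W.length) : Fin W.length :=
  ⟨(k.1 + 1) % W.length, Nat.mod_lt _ k.pos⟩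

/-- `W` has the unique max-min property with respect to the weight function `θ`:
`θ` is a strict weight function, admissible for `W`, the graph of `W` has a unique
maximum at `k` and a unique minimum at `l`, and `W` is reduced at the maximum and
minimum (`x_k ≠ x_{k+1}`, `x_l ≠ x_{l+1}`, subscripts mod `r`). -/
def UniqueMaxMinWith (θ : X → ℤ) (W : List (X × Bool)) : Prop :=
  W ≠ [] ∧ IsWeightFun θ ∧ IsStrictWeight θ ∧ IsAdmissible θ W ∧
  ∃ k l : Fin W.length,
    (∀ j : Fin W.length, j ≠ k → phiW θ W (j.1 + 1) < phiW θ W (k.1 + 1)) ∧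
    (∀ j : Fin W.length, j ≠ l → phiW θ W (l.1 + 1) < phiW θ W (j.1 + 1)) ∧
    (W.get k).1 ≠ (W.get (succIdx W k)).1 ∧
    (W.get l).1 ≠ (W.get (succIdx W l)).1

/-- `W` has the unique max-min property: it has it with respect to some
admissible strict weight function. -/
def HasUniqueMaxMin (W : List (X × Bool)) : Prop :=
  ∃ θ : X → ℤ, UniqueMaxMinWith θ W

/-- The `x`-skeleton of a relator `R = x₁^{ε₁} h₁ ⋯ x_r^{ε_r} h_r`
(encoded as the list of triples `(xᵢ, εᵢ, hᵢ)`): the word `x₁^{ε₁} ⋯ x_r^{ε_r}`. -/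
def skel (R : List (X × Bool × H)) : List (X × Bool) :=
  R.map fun t => (t.1, t.2.1)

variable [Group H]

/-- The element of the free product `H ∗ F(X)` represented by the relator
`R = x₁^{ε₁} h₁ ⋯ x_r^{ε_r} h_r`. -/
def relWord (R : List (X × Bool × H)) : Coprod H (FreeGroup X) :=
  (R.map fun t => Coprod.inr (FreeGroup.mk [(t.1, t.2.1)]) * Coprod.inl t.2.2).prod

/-- The group `G(P)` defined by the relative one-relator presentation
`P = ⟨x, H; R⟩`: the quotient of `H ∗ F(X)` by the normal closure of `R`. -/
def relGroup (R : List (X × Bool × H)) : Type _ :=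
  Coprod H (FreeGroup X) ⧸ Subgroup.normalClosure {relWord R}

instance (R : List (X × Bool × H)) : Group (relGroup R) :=
  QuotientGroup.Quotient.group _

/-- The natural homomorphism `ν : H → G(P)`. -/
def natHom (R : List (X × Bool × H)) : H →* relGroup R :=
  (QuotientGroup.mk' _).comp Coprod.inl

end Defs

/-- `W` has the unique min property with respect to `θ`: `θ` is an admissible
strict weight function for `W`, the graph of `W` has a unique minimum at `l`,
and `W` is reduced at the minimum (`x_l ≠ x_{l+1}`, subscripts mod `r`). -/
def UniqueMinWith {X : Type*} (θ : X → ℤ) (W : List (X × Bool)) : Prop :=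
  W ≠ [] ∧ IsWeightFun θ ∧ IsStrictWeight θ ∧ IsAdmissible θ W ∧
  ∃ l : Fin W.length,
    (∀ j : Fin W.length, j ≠ l → phiW θ W (l.1 + 1) < phiW θ W (j.1 + 1)) ∧
    (W.get l).1 ≠ (W.get (succIdx W l)).1

/-- `W` has the unique min property with respect to some admissible strict
weight function. -/
def HasUniqueMin {X : Type*} (W : List (X × Bool)) : Prop :=
  ∃ θ : X → ℤ, UniqueMinWith θ W


/-!
Rotate `R` so that it starts and ends at the unique minimum of its height graph; this conjugates
the relator and does not change `G(P)`. Then map `H ∗ F(x)` to the wreath product `H ≀ ℤ` by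
`h ↦ (δ₀ h, 0)` and `x ↦ (A_x, θ x)`, with `A_x = 1` except for the letter `u` of the last
syllable. This map is injective on `H`, so it suffices to choose `A_u` killing the relator. The
`ℤ`-component vanishes by admissibility. Solving the relator for the last generator gives, at
each coordinate, one value of `A_u` in terms of values of `A_u` at strictly smaller coordinates,
because every other occurrence of `u` runs strictly above the minimum (for the first letter this
is the reducedness `x_l ≠ x_{l+1}`). Such a causal equation has a solution by well-founded
recursion, starting from a coordinate below which everything is trivial.
-/

section Fixpoint

open Classical in
theorem WellFounded.exists_fixedPoint_of_causal {ι α : Type*} [Inhabited α]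
    {r : ι → ι → Prop} (hr : WellFounded r) (F : (ι → α) → ι → α)
    (hF : ∀ B B' i, (∀ j, r j i → B j = B' j) → F B i = F B' i) : ∃ B, F B = B := by
  refine ⟨hr.fix fun i rec => F (fun j => if h : r j i then rec j h else default) i, ?_⟩
  funext i
  conv_rhs => rw [hr.fix_eq]
  exact hF _ _ i fun j hj => by simp [hj]

theorem exists_fixedPoint_of_causal {ι α : Type*} [One α] (rk : ι → ℤ) (n₀ : ℤ)
    (F : (ι → α) → ι → α)
    (hF : ∀ B B' i, (∀ j, rk j < rk i → B j = B' j) → F B i = F B' i)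
    (hbot : ∀ i, rk i < n₀ → F 1 i = 1) : ∃ B, F B = B := by
  let _ : Inhabited α := ⟨1⟩
  let G : (ι → α) → ι → α := fun B i => if rk i < n₀ then 1 else F B i
  obtain ⟨B, hB⟩ := (measure fun i => (rk i - n₀ + 1).toNat).wf.exists_fixedPoint_of_causal G
    fun B B' i h => by
      by_cases hi : rk i < n₀
      · simp only [G, if_pos hi]
      · simp only [G, if_neg hi]
        refine hF B B' i fun j hj => h j ?_
        show (rk j - n₀ + 1).toNat < (rk i - n₀ + 1).toNat
        omega
  have hlow : ∀ i, rk i < n₀ → B i = 1 := fun i hi => by rw [← hB]; simp [G, hi]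
  refine ⟨B, funext fun i => ?_⟩
  by_cases hi : rk i < n₀
  · rw [hlow i hi, hF B 1 i fun j hj => hlow j (by omega), hbot i hi]
  · conv_rhs => rw [← hB]
    simp [G, hi]

end Fixpoint

section Heights

variable {X : Type*} (θ : X → ℤ)

def signedWeight (p : X × Bool) : ℤ := if p.2 then θ p.1 else -θ p.1

theorem phiW_eq_sum_take (W : List (X × Bool)) (j : ℕ) :
    phiW θ W j = ((W.take j).map (signedWeight θ)).sum := rfl

@[simp]
theorem phiW_zero (W : List (X × Bool)) : phiW θ W 0 = 0 := by
  simp [phiW]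

theorem phiW_cons_succ (p : X × Bool) (W : List (X × Bool)) (j : ℕ) :
    phiW θ (p :: W) (j + 1) = signedWeight θ p + phiW θ W j := by
  simp [phiW_eq_sum_take]

theorem phiW_append_of_le {W₁ : List (X × Bool)} (W₂ : List (X × Bool)) {j : ℕ}
    (hj : j ≤ W₁.length) : phiW θ (W₁ ++ W₂) j = phiW θ W₁ j := by
  rw [phiW_eq_sum_take, List.take_append_of_le_length hj, ← phiW_eq_sum_take]

theorem phiW_append_length_add (W₁ W₂ : List (X × Bool)) (j : ℕ) :
    phiW θ (W₁ ++ W₂) (W₁.length + j) = phiW θ W₁ W₁.length + phiW θ W₂ j := by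
  simp [phiW_eq_sum_take, List.take_length_add_append]

theorem phiW_drop (W : List (X × Bool)) (n j : ℕ) :
    phiW θ (W.drop n) j = phiW θ W (n + j) - phiW θ W n := by
  simp [phiW_eq_sum_take, List.take_add]

theorem phiW_take {W : List (X × Bool)} {n j : ℕ} (hj : j ≤ n) :
    phiW θ (W.take n) j = phiW θ W j := by
  rw [phiW_eq_sum_take, List.take_take, min_eq_left hj, ← phiW_eq_sum_take]

theorem phiW_rotate_length (W : List (X × Bool)) (n : ℕ) :
    phiW θ (W.rotate n) (W.rotate n).length = phiW θ W W.length := by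
  simp only [phiW_eq_sum_take, List.take_length, List.map_rotate]
  exact (List.rotate_perm _ n).sum_eq

theorem phiW_skel_cons_succ {H : Type*} (T : X × Bool × H) (L : List (X × Bool × H)) (j : ℕ) :
    phiW θ (skel (T :: L)) (j + 1) = signedWeight θ (T.1, T.2.1) + phiW θ (skel L) j :=
  phiW_cons_succ θ _ _ j

@[simp]
theorem length_skel {H : Type*} (L : List (X × Bool × H)) : (skel L).length = L.length :=
  List.length_map _

/-- The unique min property after rotating the minimum to both ends of the word; comparing the
`Option`s also rules out words of length `< 2`. -/
def IsBasedAtUniqueMin (W : List (X × Bool)) : Prop :=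
  IsAdmissible θ W ∧ (∀ j, 0 < j → j < W.length → 0 < phiW θ W j) ∧
    W.head?.map Prod.fst ≠ W.getLast?.map Prod.fst

variable {θ}

theorem UniqueMinWith.exists_rotate_isBasedAtUniqueMin {W : List (X × Bool)}
    (hW : UniqueMinWith θ W) : ∃ n, IsBasedAtUniqueMin θ (W.rotate n) := by
  obtain ⟨-, -, -, hadm, l, hmin, hred⟩ := hW
  have hl := l.isLt
  have hmin' : ∀ j, 0 < j → j ≤ W.length → j ≠ l.1 + 1 →
      phiW θ W (l.1 + 1) < phiW θ W j := by
    intro j hj hjr hjl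
    obtain ⟨k, rfl⟩ : ∃ k, j = k + 1 := ⟨j - 1, by omega⟩
    exact hmin ⟨k, by omega⟩ fun h => hjl (by simp [← h])
  refine ⟨l.1 + 1, ?_, fun j hj hjr => ?_, ?_⟩
  · rw [IsAdmissible, phiW_rotate_length]
    exact hadm
  · rw [List.length_rotate] at hjr
    rw [List.rotate_eq_drop_append_take (by omega)]
    rcases le_or_gt j (W.drop (l.1 + 1)).length with hj' | hj'
    · rw [phiW_append_of_le _ _ hj', phiW_drop, sub_pos]
      simp only [List.length_drop] at hj'
      exact hmin' _ (by omega) (by omega) (by omega)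
    · obtain ⟨k, rfl⟩ : ∃ k, j = (W.drop (l.1 + 1)).length + k :=
        ⟨j - (W.drop (l.1 + 1)).length, by omega⟩
      simp only [List.length_drop] at hj' hjr
      rw [phiW_append_length_add, phiW_drop, phiW_take θ (by omega), List.length_drop,
        Nat.add_sub_cancel' hl, hadm]
      linarith [hmin' k (by omega) (by omega) (by omega)]
  · have hr : W.length - 1 + (l.1 + 1) = l.1 + W.length := by omega
    rw [List.head?_eq_getElem?, List.getLast?_eq_getElem?, List.length_rotate,
      List.getElem?_rotate (by omega), List.getElem?_rotate (by omega), hr, Nat.add_mod_right,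
      Nat.mod_eq_of_lt hl, zero_add, List.getElem?_eq_getElem (Nat.mod_lt _ (by omega)),
      List.getElem?_eq_getElem hl]
    simpa [succIdx] using hred.symm

theorem IsBasedAtUniqueMin.of_append_singleton {W : List (X × Bool)} {u : X} {ε : Bool}
    (hW : IsBasedAtUniqueMin θ (W ++ [(u, ε)])) :
    (∀ p ∈ W.head?, p.1 ≠ u) ∧ (∀ j, 0 < j → j ≤ W.length → 0 < phiW θ W j) ∧
      phiW θ W W.length + signedWeight θ (u, ε) = 0 := by
  obtain ⟨hadm, hpos, hred⟩ := hW
  refine ⟨fun p hp => ?_, fun j hj hjW => ?_, ?_⟩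
  · cases W with
    | nil => simp at hp
    | cons p' W =>
      rw [List.getLast?_concat] at hred
      simp_all
  · rw [← phiW_append_of_le θ [(u, ε)] hjW]
    exact hpos j hj (by simp; omega)
  · rw [IsAdmissible, List.length_append, phiW_append_length_add] at hadm
    rw [← hadm]
    simp [phiW_eq_sum_take]

end Heights

namespace RegularWreathProduct

variable {D Q : Type*} [Group D] [Group Q]

def ofBase : (Q → D) →* D ≀ᵣ Q where
  toFun f := ⟨f, 1⟩
  map_one' := rfl
  map_mul' f g := by ext <;> simp

@[simp] theorem ofBase_left (f : Q → D) : (ofBase f).left = f := rfl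

@[simp] theorem ofBase_right (f : Q → D) : (ofBase f).right = 1 := rfl

theorem ofBase_injective : Function.Injective (ofBase : (Q → D) →* D ≀ᵣ Q) :=
  fun _ _ h => congrArg left h

end RegularWreathProduct

open RegularWreathProduct Multiplicative

section Relators

variable {X H : Type*} [Group H]

def syllable (T : X × Bool × H) : Coprod H (FreeGroup X) :=
  Coprod.inr (FreeGroup.mk [(T.1, T.2.1)]) * Coprod.inl T.2.2

theorem relWord_cons (T : X × Bool × H) (L : List (X × Bool × H)) :
    relWord (T :: L) = syllable T * relWord L := rfl

theorem relWord_append (L₁ L₂ : List (X × Bool × H)) :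
    relWord (L₁ ++ L₂) = relWord L₁ * relWord L₂ := by
  simp [relWord]

theorem relWord_singleton (T : X × Bool × H) : relWord [T] = syllable T := by
  simp [relWord, syllable]

theorem isConj_relWord_rotate (R : List (X × Bool × H)) (n : ℕ) :
    IsConj (relWord R) (relWord (R.rotate n)) := by
  rw [List.rotate_eq_drop_append_take_mod, relWord_append]
  conv_lhs => rw [← List.take_append_drop (n % R.length) R, relWord_append]
  exact isConj_iff.2 ⟨(relWord (R.take (n % R.length)))⁻¹, by group⟩

theorem natHom_injective_of_map_relWord_eq_one {K : Type*} [Group K] (R : List (X × Bool × H))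
    (Φ : Coprod H (FreeGroup X) →* K) (hΦ : Function.Injective (Φ.comp Coprod.inl))
    (hR : Φ (relWord R) = 1) : Function.Injective (natHom R) := by
  have hle : Subgroup.normalClosure {relWord R} ≤ Φ.ker :=
    Subgroup.normalClosure_le_normal (Set.singleton_subset_iff.2 hR)
  exact Function.Injective.of_comp (f := QuotientGroup.lift _ Φ hle) hΦ

end Relators

section Wreath

variable {X H : Type*} [Group H] (θ : X → ℤ)

/-- `ℤ` is written multiplicatively here: the image of `h` is supported at `1 = ofAdd 0`. -/
def toWreath (A : X → Multiplicative ℤ → H) :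
    Coprod H (FreeGroup X) →* H ≀ᵣ Multiplicative ℤ :=
  Coprod.lift (ofBase.comp (MonoidHom.mulSingle (fun _ => H) 1))
    (FreeGroup.lift fun x => ⟨A x, ofAdd (θ x)⟩)

theorem toWreath_comp_inl_injective (A : X → Multiplicative ℤ → H) :
    Function.Injective ((toWreath θ A).comp Coprod.inl) := by
  rw [toWreath, Coprod.lift_comp_inl]
  exact ofBase_injective.comp (Pi.mulSingle_injective (M := fun _ => H) 1)

theorem toWreath_syllable (A : X → Multiplicative ℤ → H) (x : X) (ε : Bool) (h : H) :
    toWreath θ A (syllable (x, ε, h)) =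
      (if ε then ⟨A x, ofAdd (θ x)⟩ else ⟨A x, ofAdd (θ x)⟩⁻¹) *
        ofBase (Pi.mulSingle 1 h) := by
  have hmk : FreeGroup.mk [(x, ε)] = if ε then FreeGroup.of x else (FreeGroup.of x)⁻¹ := by
    cases ε <;> rfl
  rw [syllable, map_mul, hmk]
  cases ε <;> simp [toWreath]

theorem toWreath_syllable_right (A : X → Multiplicative ℤ → H) (T : X × Bool × H) :
    (toWreath θ A (syllable T)).right = ofAdd (signedWeight θ (T.1, T.2.1)) := by
  obtain ⟨x, ε, h⟩ := T
  cases ε <;> simp [toWreath_syllable, signedWeight]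

theorem toWreath_syllable_left (A : X → Multiplicative ℤ → H) (T : X × Bool × H)
    (q : Multiplicative ℤ) :
    (toWreath θ A (syllable T)).left q =
      (if T.2.1 then A T.1 q else (A T.1 (ofAdd (θ T.1) * q))⁻¹) *
        Pi.mulSingle (M := fun _ => H) 1 T.2.2 (ofAdd (-signedWeight θ (T.1, T.2.1)) * q) := by
  obtain ⟨x, ε, h⟩ := T
  cases ε <;> simp [toWreath_syllable, signedWeight]

theorem toWreath_relWord_cons_left (A : X → Multiplicative ℤ → H) (T : X × Bool × H)
    (L : List (X × Bool × H)) (q : Multiplicative ℤ) :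
    (toWreath θ A (relWord (T :: L))).left q =
      (toWreath θ A (syllable T)).left q *
        (toWreath θ A (relWord L)).left (ofAdd (-signedWeight θ (T.1, T.2.1)) * q) := by
  rw [relWord_cons, map_mul, mul_left, toWreath_syllable_right, ← ofAdd_neg]
  rfl

theorem toWreath_relWord_right (A : X → Multiplicative ℤ → H) (L : List (X × Bool × H)) :
    (toWreath θ A (relWord L)).right = ofAdd (phiW θ (skel L) L.length) := by
  induction L with
  | nil => rfl
  | cons T L ih =>
    rw [relWord_cons, map_mul, mul_right, ih, toWreath_syllable_right, List.length_cons,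
      phiW_skel_cons_succ, ofAdd_add]

/- An occurrence of `u` with endpoints at heights `e` and `e + θ u` reads `A u` at `q - e`,
and both endpoints are `≥ c` exactly when `e ≥ c - min 0 (θ u)`. -/
theorem toWreath_relWord_left_congr {A A' : X → Multiplicative ℤ → H} {u : X}
    (hA : ∀ x, x ≠ u → A x = A' x) (L : List (X × Bool × H)) (c : ℤ)
    (hc : ∀ j (hj : j < L.length), L[j].1 = u →
      c ≤ phiW θ (skel L) j ∧ c ≤ phiW θ (skel L) (j + 1))
    (q : Multiplicative ℤ)
    (hq : ∀ p, toAdd p ≤ toAdd q - c + min 0 (θ u) → A u p = A' u p) :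
    (toWreath θ A (relWord L)).left q = (toWreath θ A' (relWord L)).left q := by
  induction L generalizing c q with
  | nil => rfl
  | cons T L ih =>
    rw [toWreath_relWord_cons_left, toWreath_relWord_cons_left]
    congr 1
    · rw [toWreath_syllable_left, toWreath_syllable_left]
      by_cases hT : T.1 = u
      · obtain ⟨h0, h1⟩ := hc 0 (by simp) hT
        simp only [phiW_zero, zero_add, phiW_skel_cons_succ, add_zero, signedWeight, hT] at h0 h1
        rw [hT]
        split_ifs at h1 ⊢
        · rw [hq q (by omega)]
        · rw [hq _ (by simp; omega)]
      · rw [hA _ hT]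
    · refine ih (c - signedWeight θ (T.1, T.2.1)) (fun j hj hju => ?_) _ fun p hp => hq p ?_
      · have := hc (j + 1) (by simpa using hj) (by simpa using hju)
        simp only [phiW_skel_cons_succ] at this
        omega
      · simp only [toAdd_mul, toAdd_ofAdd] at hp
        omega

theorem toWreath_one_relWord_left (L : List (X × Bool × H)) (c : ℤ)
    (hc : ∀ j < L.length, c ≤ phiW θ (skel L) (j + 1)) (q : Multiplicative ℤ)
    (hq : toAdd q < c) : (toWreath θ 1 (relWord L)).left q = 1 := by
  induction L generalizing c q with
  | nil => rfl
  | cons T L ih =>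
    have h0 := hc 0 (by simp)
    rw [phiW_skel_cons_succ, phiW_zero, add_zero] at h0
    rw [toWreath_relWord_cons_left, toWreath_syllable_left,
      ih (c - signedWeight θ (T.1, T.2.1)) (fun j hj => ?_) _ (by simp; omega)]
    · have : ofAdd (-signedWeight θ (T.1, T.2.1)) * q ≠ 1 := fun h => by
        have := congrArg toAdd h
        simp only [toAdd_mul, toAdd_ofAdd, toAdd_one] at this
        omega
      rw [Pi.mulSingle_eq_of_ne this]
      simp
    · have := hc (j + 1) (by simpa using hj)
      rw [phiW_skel_cons_succ] at this
      omega

theorem toWreath_update_relWord_left_congr [DecidableEq X] {L : List (X × Bool × H)} {u : X}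
    (hhead : ∀ p ∈ (skel L).head?, p.1 ≠ u)
    (hpos : ∀ j, 0 < j → j ≤ L.length → 0 < phiW θ (skel L) j)
    {B B' : Multiplicative ℤ → H} {q : Multiplicative ℤ}
    (hBB' : ∀ p, toAdd p ≤ toAdd q - 1 + min 0 (θ u) → B p = B' p) :
    (toWreath θ (Function.update 1 u B) (relWord L)).left q =
      (toWreath θ (Function.update 1 u B') (relWord L)).left q := by
  refine toWreath_relWord_left_congr θ (u := u) (fun x hx => by simp [Function.update_of_ne hx])
    L 1 (fun j hj hju => ?_) q fun p hp => by simpa using hBB' p hp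
  rcases Nat.eq_zero_or_pos j with rfl | hj0
  · obtain ⟨T, L, rfl⟩ := List.exists_cons_of_length_pos hj
    exact absurd hju (hhead _ rfl)
  · exact ⟨hpos j hj0 hj.le, hpos (j + 1) (by omega) hj⟩

theorem toWreath_relWord_concat_eq_one {A : X → Multiplicative ℤ → H}
    {L : List (X × Bool × H)} {u : X} {ε : Bool} {h : H}
    (hA : (⟨A u, ofAdd (θ u)⟩ : H ≀ᵣ Multiplicative ℤ) =
      if ε then (ofBase (Pi.mulSingle 1 h) * toWreath θ A (relWord L))⁻¹
      else ofBase (Pi.mulSingle 1 h) * toWreath θ A (relWord L)) :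
    toWreath θ A (relWord (L ++ [(u, ε, h)])) = 1 := by
  rw [relWord_append, relWord_singleton, map_mul, toWreath_syllable, hA]
  cases ε <;> simp

theorem exists_eq_ite_inv_of_causal
    {N : (Multiplicative ℤ → H) → H ≀ᵣ Multiplicative ℤ} {t : ℤ} (ε : Bool)
    (hright : ∀ B, (N B).right = ofAdd (if ε then -t else t))
    (hcongr : ∀ B B' q, (∀ p, toAdd p ≤ toAdd q - 1 + min 0 t → B p = B' p) →
      (N B).left q = (N B').left q)
    (hone : ∀ q, toAdd q < 0 → (N 1).left q = 1) :
    ∃ B, (⟨B, ofAdd t⟩ : H ≀ᵣ Multiplicative ℤ) = if ε then (N B)⁻¹ else N B := by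
  have := min_le_left 0 t
  have := min_le_right 0 t
  -- For `ε = true`, coordinate `q` of `(N B)⁻¹` is read from `N B` at `q - t`: hence `min 0 t`.
  have hcausal : ∀ B B' q, (∀ p, toAdd p < toAdd q → B p = B' p) →
      (if ε then (N B)⁻¹ else N B).left q = (if ε then (N B')⁻¹ else N B').left q := by
    intro B B' q hBB'
    cases ε
    · exact hcongr B B' q fun p hp => hBB' p (by omega)
    · simp only [if_true, inv_left, hright, Pi.inv_apply]
      rw [hcongr B B' _ fun p hp => hBB' p (by simp at hp; omega)]
  have hbot : ∀ q, toAdd q < min 0 t → (if ε then (N 1)⁻¹ else N 1).left q = 1 := by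
    intro q hq
    cases ε
    · exact hone q (by omega)
    · simp only [if_true, inv_left, hright, Pi.inv_apply]
      rw [hone _ (by simp; omega), inv_one]
  obtain ⟨B, hB⟩ := exists_fixedPoint_of_causal toAdd (min 0 t)
    (fun B => (if ε then (N B)⁻¹ else N B).left) hcausal hbot
  refine ⟨B, ?_⟩
  ext1
  · exact hB.symm
  · cases ε <;> simp [hright]

theorem exists_toWreath_relWord_concat_eq_one [DecidableEq X] {L : List (X × Bool × H)} {u : X}
    (ε : Bool) (h : H) (hhead : ∀ p ∈ (skel L).head?, p.1 ≠ u)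
    (hpos : ∀ j, 0 < j → j ≤ L.length → 0 < phiW θ (skel L) j)
    (hσ : phiW θ (skel L) L.length + signedWeight θ (u, ε) = 0) :
    ∃ B, toWreath θ (Function.update 1 u B) (relWord (L ++ [(u, ε, h)])) = 1 := by
  -- With `M = toWreath θ A (relWord L)` the relator reads `M (B, θ u)^ε δh = 1`,
  -- i.e. `(B, θ u)^ε = (δh M)⁻¹`.
  let N : (Multiplicative ℤ → H) → H ≀ᵣ Multiplicative ℤ :=
    fun B => ofBase (Pi.mulSingle 1 h) * toWreath θ (Function.update 1 u B) (relWord L)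
  have hright : ∀ B, (N B).right = ofAdd (if ε then -θ u else θ u) := fun B => by
    cases ε <;> simp [N, toWreath_relWord_right, eq_neg_of_add_eq_zero_left hσ, signedWeight]
  have hcongr : ∀ B B' q, (∀ p, toAdd p ≤ toAdd q - 1 + min 0 (θ u) → B p = B' p) →
      (N B).left q = (N B').left q := fun B B' q hq => by
    simp [N, toWreath_update_relWord_left_congr θ hhead hpos hq]
  have hone : ∀ q, toAdd q < 0 → (N 1).left q = 1 := fun q hq => by
    have hq1 : q ≠ 1 := fun h1 => by simp [h1] at hq
    have h1 : Function.update (1 : X → Multiplicative ℤ → H) u 1 = 1 :=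
      Function.update_eq_self_iff.2 rfl
    simp [N, h1, Pi.mulSingle_eq_of_ne hq1,
      toWreath_one_relWord_left θ L 1 (fun j hj => hpos (j + 1) (by omega) hj) q (by omega)]
  obtain ⟨B, hB⟩ := exists_eq_ite_inv_of_causal ε hright hcongr hone
  refine ⟨B, toWreath_relWord_concat_eq_one θ ?_⟩
  rwa [Function.update_self]

theorem exists_toWreath_relWord_eq_one {θ : X → ℤ} {S : List (X × Bool × H)}
    (hS : IsBasedAtUniqueMin θ (skel S)) : ∃ A, toWreath θ A (relWord S) = 1 := by
  classical
  obtain rfl | ⟨L, ⟨u, ε, h⟩, rfl⟩ := S.eq_nil_or_concat'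
  · exact absurd rfl hS.2.2
  rw [show skel (L ++ [(u, ε, h)]) = skel L ++ [(u, ε)] by simp [skel]] at hS
  obtain ⟨hhead, hpos, hσ⟩ := hS.of_append_singleton
  rw [length_skel] at hpos hσ
  obtain ⟨B, hB⟩ := exists_toWreath_relWord_concat_eq_one θ ε h hhead hpos hσ
  exact ⟨_, hB⟩

end Wreath

/-- (Consequence (i) of **Theorem 6**.) If `P = ⟨x, H; R⟩` is a relative
one-relator presentation whose `x`-skeleton has the unique min property with
respect to an admissible strict weight function, then the natural homomorphism
`ν : H → G(P)` is injective. -/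
theorem natHom_injective_of_hasUniqueMin {X H : Type*} [Group H]
    (R : List (X × Bool × H)) (hP : HasUniqueMin (skel R)) :
    Function.Injective (natHom R) := by
  obtain ⟨θ, hθ⟩ := hP
  obtain ⟨n, hn⟩ := hθ.exists_rotate_isBasedAtUniqueMin
  rw [skel, ← List.map_rotate] at hn
  obtain ⟨A, hA⟩ := exists_toWreath_relWord_eq_one hn
  refine natHom_injective_of_map_relWord_eq_one R (toWreath θ A)
    (toWreath_comp_inl_injective θ A) ?_
  rw [← isConj_one_left, ← hA]
  exact (toWreath θ A).map_isConj (isConj_relWord_rotate R n)
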